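/- arXiv:2009.05646 — 6 statements merged into one kernel-verified Lean document; each statement's English description precedes it below -/
import Mathlib

section
/- Let S be a numerical set with S ≠ ℕ and define S̃ = {B(S) − s : s ∈ S, s ≤ B(S)} ∪ [B(S), ∞). Then F(S̃) ≤ B(S) − 1 ≤ F(S) − 2, and if moreover 1 ∉ S, then F(S̃) = B(S) − 1. -/
open Set

def IsNumericalSet (S : Set ℕ) : Prop := 0 ∈ S ∧ Sᶜ.Finite

def IsNumericalSemigroup (S : Set ℕ) : Prop :=
  IsNumericalSet S ∧ ∀ a ∈ S, ∀ b ∈ S, a + b ∈ S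

/-- The associated set `A(S) = {s ∈ S : s + S ⊆ S}`. -/
def A (S : Set ℕ) : Set ℕ := {s ∈ S | ∀ t ∈ S, s + t ∈ S}

/-- The Frobenius number: the largest gap of `S`. -/
noncomputable def F (S : Set ℕ) : ℕ := sSup Sᶜ

/-- The base: the largest element of `S` below `F S`. -/
noncomputable def B (S : Set ℕ) : ℕ := sSup {s | s ∈ S ∧ s < F S}

/-- The multiplicity: the smallest positive element of `S`. -/
noncomputable def m (S : Set ℕ) : ℕ := sInf {s | s ∈ S ∧ 0 < s}

/-- The complement numerical set (for `S ≠ ℕ`). -/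
noncomputable def Stilde (S : Set ℕ) : Set ℕ :=
  {x | ∃ s ∈ S, s ≤ B S ∧ x = B S - s} ∪ {n | B S ≤ n}

-- The complement operation, with the convention that the complement of ℕ is ℕ.
open Classical in
noncomputable def complOp (S : Set ℕ) : Set ℕ :=
  if S = Set.univ then Set.univ else Stilde S

/-- The genus: the number of gaps. -/
noncomputable def genus (S : Set ℕ) : ℕ := Sᶜ.ncard

/-- The number of boxes with hook length 1. -/
noncomputable def c1 (S : Set ℕ) : ℕ := {n | n ∈ S ∧ n + 1 ∉ S}.ncard

/-- An atom: a positive element not a sum of two positive elements. -/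
def IsAtomOf (S : Set ℕ) (a : ℕ) : Prop :=
  a ∈ S ∧ 0 < a ∧ ¬ ∃ x ∈ S, ∃ y ∈ S, 0 < x ∧ 0 < y ∧ a = x + y

/-- A small atom: an atom smaller than the Frobenius number. -/
def IsSmallAtom (S : Set ℕ) (a : ℕ) : Prop := IsAtomOf S a ∧ a < F S

/-- The embedding dimension: the number of atoms. -/
noncomputable def numAtoms (S : Set ℕ) : ℕ := {a | IsAtomOf S a}.ncard

/-- Maximal embedding dimension. -/
def MaxED (S : Set ℕ) : Prop := numAtoms S = m S

/-- In `ℕ`, `sSup ∅ = 0`: `B S = 0` when no element of `S` lies below `F S`. -/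
theorem B_lt_F_or_B_eq_zero (S : Set ℕ) : B S < F S ∨ B S = 0 := by
  rcases eq_empty_or_nonempty {s | s ∈ S ∧ s < F S} with hempty | hne
  · right
    rw [B, hempty, csSup_empty, Nat.bot_eq_zero]
  · left
    exact (Nat.sSup_mem hne ⟨F S, fun _ hs => hs.2.le⟩).2

theorem compl_Stilde_subset_Iio (S : Set ℕ) : (Stilde S)ᶜ ⊆ Iio (B S) := fun _ hx =>
  mem_Iio.mpr (lt_of_not_ge fun hle => hx (Or.inr hle))

theorem Nat.sSup_le_sub_one_of_subset_Iio {T : Set ℕ} {b : ℕ} (h : T ⊆ Iio b) :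
    sSup T ≤ b - 1 :=
  csSup_le' fun _ hx => Nat.le_sub_one_of_lt (h hx)

theorem F_Stilde_le (S : Set ℕ) : F (Stilde S) ≤ B S - 1 :=
  Nat.sSup_le_sub_one_of_subset_Iio (compl_Stilde_subset_Iio S)

theorem B_sub_one_not_mem_Stilde {S : Set ℕ} (h1 : 1 ∉ S) (hB : B S ≠ 0) :
    B S - 1 ∉ Stilde S := by
  rintro (⟨s, hs, hsB, hsub⟩ | hle)
  · have hs1 : s = 1 := by omega
    exact h1 (hs1 ▸ hs)
  · exact absurd (show B S ≤ B S - 1 from hle) (by omega)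

theorem F_Stilde_eq_of_one_not_mem {S : Set ℕ} (h1 : 1 ∉ S) : F (Stilde S) = B S - 1 := by
  refine le_antisymm (F_Stilde_le S) ?_
  by_cases hB : B S = 0
  · simp [hB]
  · exact le_csSup ⟨B S, fun x hx => (compl_Stilde_subset_Iio S hx).le⟩
      (B_sub_one_not_mem_Stilde h1 hB)

theorem frobenius_of_complement_general (S : Set ℕ) :
    F (Stilde S) ≤ B S - 1 ∧ B S - 1 ≤ F S - 2 ∧ (1 ∉ S → F (Stilde S) = B S - 1) := by
  refine ⟨F_Stilde_le S, ?_, F_Stilde_eq_of_one_not_mem⟩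
  have := B_lt_F_or_B_eq_zero S
  omega

theorem frobenius_of_complement (S : Set ℕ) (hS : IsNumericalSet S) (hne : S ≠ Set.univ) :
    F (Stilde S) ≤ B S - 1 ∧ B S - 1 ≤ F S - 2 ∧ (1 ∉ S → F (Stilde S) = B S - 1) :=
  frobenius_of_complement_general S
end

section
/- Let S be a numerical set with S ≠ ℕ. Then the genus of its complement satisfies g(S̃) = g(S) + B(S) − F(S). -/
open Set

/-! The map `x ↦ B − x` is a bijection from the gaps of `S̃` onto the gaps of `S` in `(0, B]`, while
the gaps of `S` above `B` are exactly the `F − B` numbers of `(B, F]`, since `B` is the largest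
element of `S` below `F`. -/

theorem compl_Stilde (S : Set ℕ) : (Stilde S)ᶜ = (B S - ·) '' (Ioc 0 (B S) \ S) := by
  ext x
  simp only [Stilde, mem_compl_iff, mem_union, mem_ofPred_eq, mem_image, mem_sdiff, mem_Ioc]
  constructor
  · intro hx
    push Not at hx
    exact ⟨B S - x, ⟨⟨by omega, Nat.sub_le _ _⟩, fun hmem ↦ hx.1 _ hmem (Nat.sub_le _ _) (by omega)⟩,
      by omega⟩
  · rintro ⟨t, ⟨⟨ht0, htB⟩, htS⟩, rfl⟩
    push Not
    refine ⟨fun s hs _ hst ↦ ?_, by omega⟩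
    obtain rfl : s = t := by omega
    exact htS hs

theorem genus_Stilde (S : Set ℕ) : genus (Stilde S) = (Ioc 0 (B S) \ S).ncard := by
  rw [genus, compl_Stilde]
  refine InjOn.ncard_image fun a ha b hb hab ↦ ?_
  simp only [mem_sdiff, mem_Ioc] at ha hb hab
  omega

theorem Ioc_B_F_subset_compl {S : Set ℕ} (hF : F S ∉ S) : Ioc (B S) (F S) ⊆ Sᶜ := by
  rintro t ⟨hBt, htF⟩ htS
  have htF' : t < F S := htF.lt_of_ne fun h ↦ hF (h ▸ htS)
  exact hBt.not_ge (le_csSup ⟨F S, fun s hs ↦ hs.2.le⟩ ⟨htS, htF'⟩)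

namespace IsNumericalSet

variable {S : Set ℕ} (hS : IsNumericalSet S)
include hS

theorem F_not_mem (hne : S ≠ univ) : F S ∉ S :=
  Nat.sSup_mem (nonempty_compl.mpr hne) hS.2.bddAbove

theorem compl_subset_Ioc_F : Sᶜ ⊆ Ioc 0 (F S) := fun _ ht ↦
  ⟨Nat.pos_of_ne_zero fun h ↦ ht (h ▸ hS.1), le_csSup hS.2.bddAbove ht⟩

theorem B_lt_F (hne : S ≠ univ) : B S < F S := by
  have hF := hS.F_not_mem hne
  have hFpos : 0 < F S := Nat.pos_of_ne_zero fun h ↦ hF (h ▸ hS.1)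
  exact (Nat.sSup_mem ⟨0, hS.1, hFpos⟩ ⟨F S, fun s hs ↦ hs.2.le⟩ : B S ∈ {s | s ∈ S ∧ s < F S}).2

theorem compl_eq_union (hne : S ≠ univ) : Sᶜ = (Ioc 0 (B S) \ S) ∪ Ioc (B S) (F S) := by
  refine (union_subset (fun t ht ↦ ht.2) (Ioc_B_F_subset_compl (hS.F_not_mem hne))).antisymm' ?_
  intro t ht
  obtain ⟨ht0, htF⟩ := hS.compl_subset_Ioc_F ht
  rcases le_or_gt t (B S) with htB | hBt
  exacts [Or.inl ⟨⟨ht0, htB⟩, ht⟩, Or.inr ⟨hBt, htF⟩]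

theorem genus_eq (hne : S ≠ univ) : genus S = (Ioc 0 (B S) \ S).ncard + (F S - B S) := by
  have hdisj : Disjoint (Ioc 0 (B S) \ S) (Ioc (B S) (F S)) :=
    disjoint_left.mpr fun _ ht ht' ↦ ht'.1.not_ge ht.1.2
  rw [genus, hS.compl_eq_union hne, ncard_union_eq hdisj (finite_Ioc _ _).sdiff (finite_Ioc _ _),
    ncard_Ioc_nat]

end IsNumericalSet

theorem genus_of_complement (S : Set ℕ) (hS : IsNumericalSet S) (hne : S ≠ Set.univ) :
    (genus (Stilde S) : ℤ) = (genus S : ℤ) + (B S : ℤ) - (F S : ℤ) := by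
  have hBF := hS.B_lt_F hne
  rw [genus_Stilde, hS.genus_eq hne]
  omega
end

section
/- Let S be a numerical set with S ≠ ℕ such that S̃ ≠ ℕ. Then B(S̃) ≤ B(S) − m(S), with equality if and only if 1 ∉ S. -/
open Set

/-! Let `g` be the smallest gap of `S` and `s₁` the least element of `S` above `g`. Since
`x ∈ S̃ ↔ B(S) - x ∈ S`, reflection `x ↦ B(S) - x` turns the largest gap of `S̃` into `B(S) - g`
and its base into `B(S) - s₁`. So the claim reduces to `m(S) ≤ s₁`, with equality exactly when
`g = 1`, i.e. when `1 ∉ S`. -/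

noncomputable def firstGap (S : Set ℕ) : ℕ := sInf Sᶜ

noncomputable def firstElemAfterGap (S : Set ℕ) : ℕ := sInf {s | s ∈ S ∧ firstGap S < s}

section

variable {S : Set ℕ}

theorem firstGap_notMem (hne : S ≠ univ) : firstGap S ∉ S :=
  Nat.sInf_mem (nonempty_compl.mpr hne)

theorem firstGap_le {x : ℕ} (hx : x ∉ S) : firstGap S ≤ x :=
  Nat.sInf_le hx

theorem firstGap_pos (h0 : 0 ∈ S) (hne : S ≠ univ) : 0 < firstGap S :=
  Nat.pos_of_ne_zero fun h => firstGap_notMem hne (h ▸ h0)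

theorem isLeast_firstElemAfterGap {s : ℕ} (hs : s ∈ S) (hgs : firstGap S < s) :
    IsLeast {s | s ∈ S ∧ firstGap S < s} (firstElemAfterGap S) :=
  ⟨Nat.sInf_mem ⟨s, hs, hgs⟩, fun _ ht => Nat.sInf_le ht⟩

theorem m_le {s : ℕ} (hs : s ∈ S) (hpos : 0 < s) : m S ≤ s :=
  Nat.sInf_le ⟨hs, hpos⟩

theorem m_mem {s : ℕ} (hs : s ∈ S) (hpos : 0 < s) : m S ∈ S ∧ 0 < m S :=
  Nat.sInf_mem (s := {t | t ∈ S ∧ 0 < t}) ⟨s, hs, hpos⟩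

theorem F_notMem (hS : IsNumericalSet S) (hne : S ≠ univ) : F S ∉ S :=
  Nat.sSup_mem (nonempty_compl.mpr hne) hS.2.bddAbove

theorem B_mem (hS : IsNumericalSet S) (hne : S ≠ univ) : B S ∈ S := by
  have hF : 0 < F S := Nat.pos_of_ne_zero fun h => F_notMem hS hne (h ▸ hS.1)
  exact (Nat.sSup_mem (s := {s | s ∈ S ∧ s < F S}) ⟨0, hS.1, hF⟩ ⟨F S, fun _ hx => hx.2.le⟩).1

/-- For `x ≥ B S` the truncated difference `B S - x` is `0 ∈ S`, matching the second part of
`Stilde S`. -/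
theorem mem_Stilde_iff (h0 : 0 ∈ S) {x : ℕ} : x ∈ Stilde S ↔ B S - x ∈ S := by
  constructor
  · rintro (⟨s, hs, hsB, rfl⟩ | hx)
    · rwa [Nat.sub_sub_self hsB]
    · rwa [Nat.sub_eq_zero_of_le hx]
  · intro hx
    by_cases hxB : B S ≤ x
    · exact Or.inr hxB
    · exact Or.inl ⟨B S - x, hx, Nat.sub_le _ _, (Nat.sub_sub_self (le_of_not_ge hxB)).symm⟩

theorem firstGap_lt_B (h0 : 0 ∈ S) (hB : B S ∈ S) (hne' : Stilde S ≠ univ) :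
    firstGap S < B S := by
  obtain ⟨x, hx⟩ := nonempty_compl.mpr hne'
  rw [mem_compl_iff, mem_Stilde_iff h0] at hx
  have hgx := firstGap_le hx
  refine lt_of_le_of_ne (hgx.trans (Nat.sub_le _ _)) fun h => hx ?_
  rwa [show B S - x = B S by omega]

theorem F_Stilde (h0 : 0 ∈ S) (hne : S ≠ univ) (hlt : firstGap S < B S) :
    F (Stilde S) = B S - firstGap S := by
  refine IsGreatest.csSup_eq ⟨?_, fun x hx => ?_⟩
  · rw [mem_compl_iff, mem_Stilde_iff h0, Nat.sub_sub_self hlt.le]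
    exact firstGap_notMem hne
  · rw [mem_compl_iff, mem_Stilde_iff h0] at hx
    have hxB : x < B S := by
      by_contra! h
      exact hx (by rwa [Nat.sub_eq_zero_of_le h])
    have := firstGap_le hx
    omega

theorem B_Stilde (h0 : 0 ∈ S) (hne : S ≠ univ) (hB : B S ∈ S) (hlt : firstGap S < B S) :
    B (Stilde S) = B S - firstElemAfterGap S := by
  obtain ⟨⟨he, hge⟩, hleast⟩ := isLeast_firstElemAfterGap hB hlt
  have heB : firstElemAfterGap S ≤ B S := hleast ⟨hB, hlt⟩
  rw [B, F_Stilde h0 hne hlt]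
  refine IsGreatest.csSup_eq ⟨⟨?_, by omega⟩, fun x ⟨hx, hxF⟩ => ?_⟩
  · rwa [mem_Stilde_iff h0, Nat.sub_sub_self heB]
  · rw [mem_Stilde_iff h0] at hx
    have := hleast ⟨hx, (by omega : firstGap S < B S - x)⟩
    omega

theorem m_le_firstElemAfterGap (h0 : 0 ∈ S) (hne : S ≠ univ) {s : ℕ} (hs : s ∈ S)
    (hgs : firstGap S < s) : m S ≤ firstElemAfterGap S := by
  obtain ⟨⟨he, hge⟩, -⟩ := isLeast_firstElemAfterGap hs hgs
  exact m_le he (by have := firstGap_pos h0 hne; omega)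

theorem m_eq_firstElemAfterGap_iff (h0 : 0 ∈ S) (hne : S ≠ univ) {s : ℕ} (hs : s ∈ S)
    (hgs : firstGap S < s) : m S = firstElemAfterGap S ↔ 1 ∉ S := by
  obtain ⟨⟨he, hge⟩, hleast⟩ := isLeast_firstElemAfterGap hs hgs
  have hg := firstGap_pos h0 hne
  constructor
  · intro heq h1
    have hg1 : firstGap S ≠ 1 := fun h => firstGap_notMem hne (h ▸ h1)
    have := m_le h1 one_pos
    omega
  · intro h1
    have hg1 : firstGap S = 1 := le_antisymm (firstGap_le h1) hg
    obtain ⟨hmS, hm0⟩ := m_mem he (by omega)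
    have hm1 : m S ≠ 1 := fun h => h1 (h ▸ hmS)
    exact le_antisymm (m_le he (by omega)) (hleast ⟨hmS, by omega⟩)

end

theorem base_of_complement (S : Set ℕ) (hS : IsNumericalSet S) (hne : S ≠ Set.univ)
    (hne' : Stilde S ≠ Set.univ) :
    B (Stilde S) + m S ≤ B S ∧ (B (Stilde S) + m S = B S ↔ 1 ∉ S) := by
  have hB := B_mem hS hne
  have hlt := firstGap_lt_B hS.1 hB hne'
  have heB : firstElemAfterGap S ≤ B S := (isLeast_firstElemAfterGap hB hlt).2 ⟨hB, hlt⟩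
  have hme := m_le_firstElemAfterGap hS.1 hne hB hlt
  rw [B_Stilde hS.1 hne hB hlt, ← m_eq_firstElemAfterGap_iff hS.1 hne hB hlt]
  omega
end

section
/- Let T be a numerical set with T ≠ ℕ satisfying: (a) F(T) ∉ T + T, and (b) for all x, y ∈ T with x, y ≤ F(T) and x + y > F(T), x + y − F(T) − 1 ∈ T. Then S = {F(T) + 1 − x : x ∈ T, x ≤ F(T) + 1} ∪ {n : n ≥ F(T) + 3} is a numerical semigroup. -/
open Set

/-!
Writing `a = F + 1 - x` and `b = F + 1 - y`, a sum `a + b < F + 3` forces `x + y ≥ F`; condition (a)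
rules out `x + y = F`, and then `a + b = F + 1 - (x + y - (F + 1))` is the reflection of the element
that condition (b) provides.
-/

theorem mem_of_F_lt {T : Set ℕ} (hfin : Tᶜ.Finite) {n : ℕ} (hn : F T < n) : n ∈ T :=
  by_contra fun h => hn.not_ge (le_csSup hfin.bddAbove h)

def dual (T : Set ℕ) : Set ℕ :=
  {y | ∃ x ∈ T, x ≤ F T + 1 ∧ y = F T + 1 - x} ∪ {n | F T + 3 ≤ n}

theorem mem_dual_iff {T : Set ℕ} {y : ℕ} :
    y ∈ dual T ↔ (y ≤ F T + 1 ∧ F T + 1 - y ∈ T) ∨ F T + 3 ≤ y := by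
  simp only [dual, mem_union, mem_ofPred_eq]
  constructor
  · rintro (⟨x, hx, hxF, rfl⟩ | h)
    · exact Or.inl ⟨by omega, by rwa [Nat.sub_sub_self hxF]⟩
    · exact Or.inr h
  · rintro (⟨hy, hyT⟩ | h)
    · exact Or.inl ⟨_, hyT, by omega, by omega⟩
    · exact Or.inr h

theorem dual_compl_finite (T : Set ℕ) : (dual T)ᶜ.Finite :=
  (finite_Iio (F T + 3)).subset fun n hn => by
    simp only [mem_compl_iff, mem_dual_iff, not_or, not_le] at hn
    exact hn.2

theorem add_mem_dual {T : Set ℕ} (ha : ∀ x ∈ T, ∀ y ∈ T, x + y ≠ F T)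
    (hb : ∀ x ∈ T, ∀ y ∈ T, x ≤ F T → y ≤ F T → F T < x + y → x + y - (F T + 1) ∈ T)
    {a b : ℕ} (haT : a ∈ dual T) (hbT : b ∈ dual T) : a + b ∈ dual T := by
  rcases Nat.eq_zero_or_pos a with rfl | ha0
  · simpa using hbT
  rcases Nat.eq_zero_or_pos b with rfl | hb0
  · simpa using haT
  rcases le_or_gt (F T + 3) (a + b) with hab | hab
  · exact mem_dual_iff.2 (Or.inr hab)
  obtain ⟨haF, hxT⟩ := (mem_dual_iff.1 haT).resolve_right (by omega)
  obtain ⟨hbF, hyT⟩ := (mem_dual_iff.1 hbT).resolve_right (by omega)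
  have hsum : F T < (F T + 1 - a) + (F T + 1 - b) :=
    lt_of_le_of_ne (by omega) (ha _ hxT _ hyT).symm
  refine mem_dual_iff.2 (Or.inl ⟨by omega, ?_⟩)
  convert hb _ hxT _ hyT (by omega) (by omega) hsum using 1
  omega

theorem explicit_semigroup_from_conditions_general (T : Set ℕ) (hT : IsNumericalSet T)
    (ha : ∀ x ∈ T, ∀ y ∈ T, x + y ≠ F T)
    (hb : ∀ x ∈ T, ∀ y ∈ T, x ≤ F T → y ≤ F T → F T < x + y → x + y - (F T + 1) ∈ T) :
    IsNumericalSemigroup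
      ({y | ∃ x ∈ T, x ≤ F T + 1 ∧ y = F T + 1 - x} ∪ {n | F T + 3 ≤ n}) := by
  have hzero : 0 ∈ dual T :=
    mem_dual_iff.2 (Or.inl ⟨Nat.zero_le _, mem_of_F_lt hT.2 (Nat.lt_succ_self _)⟩)
  exact ⟨⟨hzero, dual_compl_finite T⟩, fun a haT b hbT => add_mem_dual ha hb haT hbT⟩

theorem explicit_semigroup_from_conditions (T : Set ℕ) (hT : IsNumericalSet T)
    (hne : T ≠ Set.univ) (ha : ∀ x ∈ T, ∀ y ∈ T, x + y ≠ F T)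
    (hb : ∀ x ∈ T, ∀ y ∈ T, x ≤ F T → y ≤ F T → F T < x + y → x + y - (F T + 1) ∈ T) :
    IsNumericalSemigroup
      ({y | ∃ x ∈ T, x ≤ F T + 1 ∧ y = F T + 1 - x} ∪ {n | F T + 3 ≤ n}) :=
  explicit_semigroup_from_conditions_general T hT ha hb
end

section
/- Let S be a numerical set with S ≠ ℕ such that its complement S̃ is a numerical semigroup. Then A(S) has at most one small atom. Moreover, if S is not itself a numerical semigroup, then A(S) ∩ [1, B(S) − 1] = ∅; in particular A(S) is either {0} ∪ [F(S)+1, ∞) or {0, B(S)} ∪ [F(S)+1, ∞). -/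
open Set

/-!
Write `T = S̃` and `b = B(S)`, so that `x ↦ b - x` exchanges `S ∩ [0, b]` and `T ∩ [0, b]`.
An element `a ∈ A(S)` with `0 < a < b` lets `T ∩ [0, b]` step down by `a`, while the semigroup
`T` lets it step up by `ρ = m(T)`; since `ρ + a ≤ b` these steps can be combined into a walk
from `x` to `x - ρ = x + (a - 1)ρ - ρa` inside `[0, b]`. Hence `T ∩ [0, b]`, and with it
`S ∩ [0, F(S)]`, is the set of multiples of `ρ` up to `b`, and a multiple of `ρ` lying in
`[a - ρ, a)` shows `F(S) < b + ρ`. Such an `S` is a numerical semigroup whose only small atom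
is `ρ`. Otherwise `A(S) ⊆ {0, b} ∪ (F(S), ∞)`.
-/

section Walk

variable {P : Set ℕ} {N a r : ℕ}

theorem mem_of_add_mul_eq_add_mul (hN : r + a ≤ N)
    (hsub : ∀ x ∈ P, a ≤ x → x ≤ N → x - a ∈ P) (hadd : ∀ x ∈ P, x + r ≤ N → x + r ∈ P)
    {x : ℕ} (hx : x ∈ P) (hxN : x ≤ N) {j l y : ℕ} (h : y + j * a = x + l * r) (hyN : y ≤ N) :
    y ∈ P := by
  obtain ⟨n, hn⟩ : ∃ n, j + l = n := ⟨_, rfl⟩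
  induction n generalizing j l y with
  | zero =>
    obtain ⟨rfl, rfl⟩ : j = 0 ∧ l = 0 := by omega
    simp only [zero_mul, add_zero] at h
    rwa [h]
  | succ n ih =>
    -- Undo the last `+ r` step if `r ≤ y`, otherwise the last `- a` step; the latter stays in
    -- `[0, N]` because then `y < r` (or no `+ r` step is left) and `r + a ≤ N`.
    by_cases hdown : 0 < l ∧ r ≤ y
    · obtain ⟨l, rfl⟩ : ∃ l', l = l' + 1 := ⟨l - 1, by omega⟩
      rw [add_one_mul] at h
      have := hadd _ (ih (j := j) (l := l) (y := y - r) (by omega) (by omega) (by omega)) (by omega)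
      rwa [Nat.sub_add_cancel hdown.2] at this
    · rcases j with _ | j
      · have : r ≤ l * r := Nat.le_mul_of_pos_left r (by omega)
        omega
      rw [add_one_mul] at h
      have hyaN : y + a ≤ N := by
        rcases Nat.eq_zero_or_pos l with rfl | hl
        · rw [zero_mul] at h; omega
        · omega
      have := hsub _ (ih (j := j) (l := l) (y := y + a) (by omega) hyaN (by omega)) (by omega) hyaN
      rwa [Nat.add_sub_cancel] at this

theorem sub_mem_of_closed_sub_add (hN : r + a ≤ N) (ha : 0 < a)
    (hsub : ∀ x ∈ P, a ≤ x → x ≤ N → x - a ∈ P) (hadd : ∀ x ∈ P, x + r ≤ N → x + r ∈ P)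
    {x : ℕ} (hx : x ∈ P) (hrx : r ≤ x) (hxN : x ≤ N) : x - r ∈ P := by
  refine mem_of_add_mul_eq_add_mul hN hsub hadd hx hxN (j := r) (l := a - 1) ?_ (by omega)
  obtain ⟨a, rfl⟩ : ∃ a', a = a' + 1 := ⟨a - 1, by omega⟩
  rw [Nat.add_sub_cancel, mul_add_one, mul_comm r a]
  omega

theorem dvd_of_closed_sub (hd : 0 < a) (hsub : ∀ x ∈ P, a ≤ x → x ≤ N → x - a ∈ P)
    (hsmall : ∀ x ∈ P, x < a → x = 0) {x : ℕ} (hx : x ∈ P) (hxN : x ≤ N) : a ∣ x := by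
  induction x using Nat.strong_induction_on with
  | _ x ih =>
    by_cases hax : a ≤ x
    · have := Nat.dvd_add (ih (x - a) (by omega) (hsub x hx hax hxN) (by omega)) (dvd_refl a)
      rwa [Nat.sub_add_cancel hax] at this
    · rw [hsmall x hx (by omega)]
      exact dvd_zero a

end Walk

variable {S : Set ℕ}

theorem IsNumericalSemigroup.mul_mem {T : Set ℕ} (hT : IsNumericalSemigroup T) {x : ℕ}
    (hx : x ∈ T) (k : ℕ) : k * x ∈ T := by
  induction k with
  | zero => simpa using hT.1.1
  | succ k ih => simpa [add_one_mul] using hT.2 _ ih _ hx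

theorem F_le_of_forall_lt_mem {f : ℕ} (h : ∀ n, f < n → n ∈ S) : F S ≤ f :=
  csSup_le' (s := Sᶜ) fun n hn => not_lt.1 fun hfn => hn (h n hfn)

theorem m_le_s10 {x : ℕ} (hx : x ∈ S) (hx0 : 0 < x) : m S ≤ x :=
  Nat.sInf_le ⟨hx, hx0⟩

theorem m_mem_and_pos {x : ℕ} (hx : x ∈ S) (hx0 : 0 < x) : m S ∈ S ∧ 0 < m S :=
  Nat.sInf_mem (s := {s | s ∈ S ∧ 0 < s}) ⟨x, hx, hx0⟩

theorem eq_zero_of_mem_of_lt_m {x : ℕ} (hx : x ∈ S) (hxm : x < m S) : x = 0 :=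
  Nat.eq_zero_of_not_pos fun hx0 => (m_le_s10 hx hx0).not_gt hxm

theorem sub_mem_Stilde {s : ℕ} (hs : s ∈ S) (hsB : s ≤ B S) : B S - s ∈ Stilde S :=
  Or.inl ⟨s, hs, hsB, rfl⟩

theorem sub_mem_of_mem_Stilde (h0 : 0 ∈ S) {x : ℕ} (hx : x ∈ Stilde S) (hxB : x ≤ B S) :
    B S - x ∈ S := by
  rcases hx with ⟨s, hs, hsB, rfl⟩ | hx
  · rwa [Nat.sub_sub_self hsB]
  · have hBx : B S ≤ x := hx
    rwa [show B S - x = 0 by omega]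

theorem zero_mem_A (h0 : 0 ∈ S) : 0 ∈ A S :=
  ⟨h0, fun t ht => by simpa using ht⟩

theorem IsNumericalSemigroup.A_eq (hS : IsNumericalSemigroup S) : A S = S :=
  subset_antisymm (fun _ ha => ha.1) fun a ha => ⟨ha, hS.2 a ha⟩

theorem sub_mem_Stilde_of_mem_A (h0 : 0 ∈ S) {a x : ℕ} (ha : a ∈ A S) (hx : x ∈ Stilde S)
    (hax : a ≤ x) (hxB : x ≤ B S) : x - a ∈ Stilde S := by
  have := sub_mem_Stilde (ha.2 _ (sub_mem_of_mem_Stilde h0 hx hxB)) (by omega)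
  rwa [show B S - (a + (B S - x)) = x - a by omega] at this

namespace IsNumericalSet

theorem F_notMem (hS : IsNumericalSet S) (hne : S ≠ univ) : F S ∉ S :=
  Nat.sSup_mem (nonempty_compl.2 hne) hS.2.bddAbove

theorem mem_of_F_lt (hS : IsNumericalSet S) {n : ℕ} (hn : F S < n) : n ∈ S := by
  by_contra h
  exact (le_csSup hS.2.bddAbove h).not_gt hn

theorem mem_A_of_F_lt (hS : IsNumericalSet S) {n : ℕ} (hn : F S < n) : n ∈ A S :=
  ⟨hS.mem_of_F_lt hn, fun _ _ => hS.mem_of_F_lt (by omega)⟩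

theorem F_A_le (hS : IsNumericalSet S) : F (A S) ≤ F S :=
  F_le_of_forall_lt_mem fun _ => hS.mem_A_of_F_lt

theorem B_mem_and_lt_F (hS : IsNumericalSet S) (hne : S ≠ univ) : B S ∈ S ∧ B S < F S := by
  have hF0 : 0 < F S := Nat.pos_of_ne_zero fun h => hS.F_notMem hne (h ▸ hS.1)
  exact Nat.sSup_mem (s := {s | s ∈ S ∧ s < F S}) ⟨0, hS.1, hF0⟩ ⟨F S, fun _ hx => hx.2.le⟩

theorem le_B_or_F_lt (hS : IsNumericalSet S) (hne : S ≠ univ) {s : ℕ} (hs : s ∈ S) :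
    s ≤ B S ∨ F S < s := by
  rcases lt_trichotomy s (F S) with h | rfl | h
  · exact Or.inl (le_csSup ⟨F S, fun _ hx => hx.2.le⟩ ⟨hs, h⟩)
  · exact absurd hs (hS.F_notMem hne)
  · exact Or.inr h

theorem F_add_lt_of_mem_A (hS : IsNumericalSet S) (hne : S ≠ univ) {a x : ℕ} (ha : a ∈ A S)
    (haB : a ≤ B S) (hx : x ∈ Stilde S) (hxa : x < a) : F S + x < B S + a := by
  have := ha.2 _ (sub_mem_of_mem_Stilde hS.1 hx (by omega))
  rcases hS.le_B_or_F_lt hne this with h | h <;> omega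

section MiddleElement

variable {a : ℕ}

theorem m_Stilde_dvd (hS : IsNumericalSet S) (hT : IsNumericalSemigroup (Stilde S))
    (ha : a ∈ A S) (ha0 : 0 < a) (haB : a < B S) {x : ℕ} (hx : x ∈ Stilde S) (hxB : x ≤ B S) :
    m (Stilde S) ∣ x := by
  have hBa : B S - a ∈ Stilde S := sub_mem_Stilde ha.1 haB.le
  obtain ⟨hmT, hm0⟩ := m_mem_and_pos hBa (by omega)
  have hmaB : m (Stilde S) + a ≤ B S := by
    have := m_le_s10 hBa (by omega)
    omega
  have hsub : ∀ y ∈ Stilde S, a ≤ y → y ≤ B S → y - a ∈ Stilde S :=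
    fun _ hy hay hyB => sub_mem_Stilde_of_mem_A hS.1 ha hy hay hyB
  refine dvd_of_closed_sub hm0 (fun y hy hmy hyB => ?_) (fun _ => eq_zero_of_mem_of_lt_m) hx hxB
  exact sub_mem_of_closed_sub_add hmaB ha0 hsub (fun z hz _ => hT.2 z hz _ hmT) hy hmy hyB

theorem F_lt_B_add_m_Stilde (hS : IsNumericalSet S) (hne : S ≠ univ)
    (hT : IsNumericalSemigroup (Stilde S)) (ha : a ∈ A S) (ha0 : 0 < a) (haB : a < B S) :
    F S < B S + m (Stilde S) := by
  obtain ⟨hmT, hm0⟩ := m_mem_and_pos (sub_mem_Stilde ha.1 haB.le) (by omega)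
  set ρ := m (Stilde S)
  set y := (a - 1) / ρ * ρ
  have hya : y < a := by
    have := Nat.div_mul_le_self (a - 1) ρ
    omega
  have hay : a - 1 < y + ρ := Nat.lt_div_mul_add hm0
  have := hS.F_add_lt_of_mem_A hne ha haB.le (hT.mul_mem hmT _) hya
  omega

theorem mem_iff_m_Stilde_dvd (hS : IsNumericalSet S) (hT : IsNumericalSemigroup (Stilde S))
    (ha : a ∈ A S) (ha0 : 0 < a) (haB : a < B S) {w : ℕ} (hwB : w ≤ B S) :
    w ∈ S ↔ m (Stilde S) ∣ w := by
  have hdvd : ∀ {x}, x ∈ Stilde S → x ≤ B S → m (Stilde S) ∣ x := hS.m_Stilde_dvd hT ha ha0 haB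
  have hB : m (Stilde S) ∣ B S := hdvd (Or.inr (le_refl (B S))) le_rfl
  constructor
  · intro hw
    have := Nat.dvd_sub hB (hdvd (sub_mem_Stilde hw hwB) (Nat.sub_le _ _))
    rwa [Nat.sub_sub_self hwB] at this
  · intro hw
    obtain ⟨hmT, -⟩ := m_mem_and_pos (sub_mem_Stilde ha.1 haB.le) (by omega)
    obtain ⟨k, hk⟩ := Nat.dvd_sub hB hw
    have hBw : B S - w ∈ Stilde S := by
      rw [hk, mul_comm]
      exact hT.mul_mem hmT k
    have := sub_mem_of_mem_Stilde hS.1 hBw (Nat.sub_le _ _)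
    rwa [Nat.sub_sub_self hwB] at this

end MiddleElement

section Periodic

variable {g : ℕ}

theorem isNumericalSemigroup_of_mem_iff_dvd (hS : IsNumericalSet S) (hne : S ≠ univ)
    (hF : F S < B S + g) (hdvd : ∀ w ≤ B S, w ∈ S ↔ g ∣ w) : IsNumericalSemigroup S := by
  refine ⟨hS, fun x hx y hy => ?_⟩
  by_cases hxyF : F S < x + y
  · exact hS.mem_of_F_lt hxyF
  have hxB := (hS.le_B_or_F_lt hne hx).resolve_right (by omega)
  have hyB := (hS.le_B_or_F_lt hne hy).resolve_right (by omega)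
  have hxy : g ∣ x + y := Nat.dvd_add ((hdvd x hxB).1 hx) ((hdvd y hyB).1 hy)
  by_cases hxyB : x + y ≤ B S
  · exact (hdvd _ hxyB).2 hxy
  have hB : g ∣ B S := (hdvd _ le_rfl).1 (hS.B_mem_and_lt_F hne).1
  have := Nat.le_of_dvd (by omega) (Nat.dvd_sub hxy hB)
  omega

theorem eq_of_isSmallAtom_A (hS : IsNumericalSet S) (hne : S ≠ univ) (hF : F S < B S + g)
    (hdvd : ∀ w ≤ B S, w ∈ S ↔ g ∣ w) {x : ℕ} (hx : IsSmallAtom (A S) x) : x = g := by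
  rw [(hS.isNumericalSemigroup_of_mem_iff_dvd hne hF hdvd).A_eq] at hx
  obtain ⟨⟨hxS, hx0, hnsum⟩, hxF⟩ := hx
  have hxB : x ≤ B S := (hS.le_B_or_F_lt hne hxS).resolve_right (by omega)
  have hgx : g ∣ x := (hdvd x hxB).1 hxS
  have hg0 : 0 < g := Nat.pos_of_dvd_of_pos hgx hx0
  by_contra hxg
  have hlt : g < x := (Nat.le_of_dvd hx0 hgx).lt_of_ne (Ne.symm hxg)
  exact hnsum ⟨g, (hdvd g (by omega)).2 dvd_rfl, x - g,
    (hdvd _ (by omega)).2 (Nat.dvd_sub hgx dvd_rfl), hg0, by omega, by omega⟩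

end Periodic

theorem eq_zero_or_eq_B_or_F_lt_of_mem_A (hS : IsNumericalSet S) (hne : S ≠ univ)
    (hmid : ∀ a ∈ A S, 0 < a → B S ≤ a) {x : ℕ} (hx : x ∈ A S) :
    x = 0 ∨ x = B S ∨ F S < x := by
  have := hmid x hx
  rcases hS.le_B_or_F_lt hne hx.1 with h | h <;> omega

theorem eq_B_of_isSmallAtom_A (hS : IsNumericalSet S) (hne : S ≠ univ)
    (hmid : ∀ a ∈ A S, 0 < a → B S ≤ a) {x : ℕ} (hx : IsSmallAtom (A S) x) : x = B S := by
  obtain ⟨⟨hxA, hx0, -⟩, hxF⟩ := hx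
  have := hS.F_A_le
  rcases hS.eq_zero_or_eq_B_or_F_lt_of_mem_A hne hmid hxA with h | h | h <;> omega

theorem A_eq_or_eq (hS : IsNumericalSet S) (hne : S ≠ univ)
    (hmid : ∀ a ∈ A S, 0 < a → B S ≤ a) :
    A S = {0} ∪ {n | F S + 1 ≤ n} ∨ A S = {0, B S} ∪ {n | F S + 1 ≤ n} := by
  have hA : ∀ x, x ∈ A S ↔ x = 0 ∨ (x = B S ∧ B S ∈ A S) ∨ F S + 1 ≤ x := by
    refine fun x => ⟨fun hx => ?_, ?_⟩
    · rcases hS.eq_zero_or_eq_B_or_F_lt_of_mem_A hne hmid hx with h | rfl | h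
      exacts [Or.inl h, Or.inr (Or.inl ⟨rfl, hx⟩), Or.inr (Or.inr h)]
    · rintro (rfl | ⟨rfl, hB⟩ | h)
      exacts [zero_mem_A hS.1, hB, hS.mem_A_of_F_lt h]
  by_cases hB : B S ∈ A S
  · right
    ext x
    simp only [hA x, hB, and_true, mem_union, mem_insert_iff, mem_singleton_iff, mem_ofPred_eq]
    tauto
  · left
    ext x
    simp only [hA x, hB, and_false, false_or, mem_union, mem_singleton_iff, mem_ofPred_eq]

end IsNumericalSet

theorem associated_when_complement_semigroup (S : Set ℕ) (hS : IsNumericalSet S)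
    (hne : S ≠ Set.univ) (hT : IsNumericalSemigroup (Stilde S)) :
    {a | IsSmallAtom (A S) a}.ncard ≤ 1 ∧
      (¬ IsNumericalSemigroup S →
        A S ∩ Set.Icc 1 (B S - 1) = ∅ ∧
          (A S = {0} ∪ {n | F S + 1 ≤ n} ∨ A S = {0, B S} ∪ {n | F S + 1 ≤ n})) := by
  by_cases hmid : ∃ a ∈ A S, 0 < a ∧ a < B S
  · obtain ⟨a, ha, ha0, haB⟩ := hmid
    have hF := hS.F_lt_B_add_m_Stilde hne hT ha ha0 haB
    have hdvd : ∀ w ≤ B S, w ∈ S ↔ m (Stilde S) ∣ w :=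
      fun _ => hS.mem_iff_m_Stilde_dvd hT ha ha0 haB
    refine ⟨?_, fun hns => absurd (hS.isNumericalSemigroup_of_mem_iff_dvd hne hF hdvd) hns⟩
    exact (ncard_le_ncard (subset_singleton_iff.2 fun x hx =>
      hS.eq_of_isSmallAtom_A hne hF hdvd hx)).trans_eq (ncard_singleton _)
  · push Not at hmid
    refine ⟨(ncard_le_ncard (subset_singleton_iff.2 fun x hx =>
      hS.eq_B_of_isSmallAtom_A hne hmid hx)).trans_eq (ncard_singleton _),
      fun _ => ⟨?_, hS.A_eq_or_eq hne hmid⟩⟩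
    refine eq_empty_of_forall_notMem fun x ⟨hx, hx1, hxB⟩ => ?_
    have := hmid x hx (by omega)
    omega
end

section
/- Let S be a numerical set with S ≠ ℕ such that S is not a numerical semigroup, and suppose S̃ is a numerical semigroup. If S ∩ [1, F(S) − B(S)] ≠ ∅ then A(S) = {0} ∪ [F(S)+1, ∞), and if S ∩ [1, F(S) − B(S)] = ∅ then A(S) = {0, B(S)} ∪ [F(S)+1, ∞). -/
open Set

lemma exists_k (s Bn : ℕ) (hB : 0 < Bn) (c : ℤ) (hc : (Nat.gcd s Bn : ℤ) ∣ c) :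
    ∃ k : ℕ, (Bn : ℤ) ∣ (k * s - c) := by
  obtain ⟨c', rfl⟩ := hc
  have hbez : (Nat.gcd s Bn : ℤ) = s * Nat.gcdA s Bn + Bn * Nat.gcdB s Bn := Nat.gcd_eq_gcd_ab s Bn
  set k0 : ℤ := Nat.gcdA s Bn * c' with hk0
  have h1 : (Bn : ℤ) ∣ (k0 * s - (Nat.gcd s Bn : ℤ) * c') := by
    rw [hbez]
    exact ⟨-(Nat.gcdB s Bn * c'), by ring⟩
  have hBz : (0:ℤ) < Bn := by exact_mod_cast hB
  refine ⟨(k0 % Bn).toNat, ?_⟩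
  have hmod : ((k0 % Bn).toNat : ℤ) = k0 % Bn := Int.toNat_of_nonneg (Int.emod_nonneg _ (by omega))
  have h2 : (Bn : ℤ) ∣ (k0 % Bn - k0) := by
    have heq : k0 % Bn - k0 = -(Bn * (k0 / Bn)) := by rw [Int.emod_def]; ring
    rw [heq]
    exact dvd_neg.mpr (Dvd.intro _ rfl)
  have h3 : ((k0 % Bn).toNat : ℤ) * s - (Nat.gcd s Bn : ℤ) * c'
      = (k0 % Bn - k0) * s + (k0 * s - (Nat.gcd s Bn : ℤ) * c') := by rw [hmod]; ring
  rw [h3]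
  exact dvd_add (h2.mul_right _) h1

lemma coset_reach (Bn s : ℕ) (hs : 0 < s) (hsB : s < Bn)
    (P : ℕ → Prop)
    (hstep : ∀ a, 1 ≤ a → a ≤ Bn → P a → P (if a + s ≤ Bn then a + s else a + s - Bn)) :
    ∀ (k : ℕ) (a : ℕ), 1 ≤ a → a ≤ Bn → P a →
      ∃ b, 1 ≤ b ∧ b ≤ Bn ∧ P b ∧ (b : ℤ) % Bn = ((a : ℤ) + k * s) % Bn := by
  intro k
  induction k with
  | zero =>
    intro a h1 h2 h3
    exact ⟨a, h1, h2, h3, by push_cast; ring_nf⟩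
  | succ n ih =>
    intro a h1 h2 h3
    obtain ⟨b, hb1, hbB, hPb, hbmod⟩ := ih a h1 h2 h3
    have hPb' := hstep b hb1 hbB hPb
    have hkey : ((b:ℤ) + s) % Bn = ((a:ℤ) + (n + 1) * s) % Bn := by
      have : ((b:ℤ) + s) % Bn = ((a:ℤ) + n * s + s) % Bn := Int.ModEq.add_right _ hbmod
      rw [this]
      congr 1
      ring
    by_cases hc : b + s ≤ Bn
    · refine ⟨b + s, by omega, hc, by rwa [if_pos hc] at hPb', ?_⟩
      push_cast
      exact hkey
    · refine ⟨b + s - Bn, by omega, by omega, by rwa [if_neg hc] at hPb', ?_⟩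
      have h4 : ((b + s - Bn : ℕ) : ℤ) = (b:ℤ) + s - Bn := by
        have : Bn ≤ b + s := by omega
        push_cast [this]
        ring
      rw [h4, Int.sub_emod, Int.emod_self, sub_zero, Int.emod_emod_of_dvd _ dvd_rfl]
      push_cast
      exact hkey

lemma coset_lemma (Bn s : ℕ) (hs : 0 < s) (hsB : s < Bn)
    (P : ℕ → Prop)
    (hstep : ∀ a, 1 ≤ a → a ≤ Bn → P a → P (if a + s ≤ Bn then a + s else a + s - Bn))
    (a x : ℕ) (ha1 : 1 ≤ a) (haB : a ≤ Bn) (hPa : P a)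
    (hx1 : 1 ≤ x) (hxB : x ≤ Bn) (hmod : (Nat.gcd s Bn : ℤ) ∣ (x : ℤ) - (a : ℤ)) :
    P x := by
  obtain ⟨k, hk⟩ := exists_k s Bn (by omega) ((x:ℤ) - a) hmod
  obtain ⟨b, hb1, hbB, hPb, hbmod⟩ := coset_reach Bn s hs hsB P hstep k a ha1 haB hPa
  have h1 : (Bn : ℤ) ∣ ((a:ℤ) + k * s - x) := by
    have heq : (a:ℤ) + k * s - x = (k * s - ((x:ℤ) - a)) := by ring
    rw [heq]; exact hk
  have h2 : (Bn : ℤ) ∣ ((b:ℤ) - x) := by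
    have h3 : (Bn:ℤ) ∣ ((b:ℤ) - ((a:ℤ) + k*s)) := Int.ModEq.dvd (Int.ModEq.symm hbmod)
    have heq : (b:ℤ) - x = ((b:ℤ) - ((a:ℤ) + k*s)) + ((a:ℤ) + k * s - x) := by ring
    rw [heq]; exact dvd_add h3 h1
  have h0 : (b:ℤ) - x = 0 := Int.eq_zero_of_abs_lt_dvd h2 (by rw [abs_lt]; constructor <;> [omega; omega])
  have : b = x := by omega
  rwa [this] at hPb


theorem associated_dichotomy (S : Set ℕ) (hS : IsNumericalSet S) (hne : S ≠ Set.univ)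
    (hnsg : ¬ IsNumericalSemigroup S) (hT : IsNumericalSemigroup (Stilde S)) :
    (S ∩ Set.Icc 1 (F S - B S) ≠ ∅ → A S = {0} ∪ {n | F S + 1 ≤ n}) ∧
      (S ∩ Set.Icc 1 (F S - B S) = ∅ → A S = {0, B S} ∪ {n | F S + 1 ≤ n}) := by
  obtain ⟨h0S, hfin⟩ := hS
  have hcne : Sᶜ.Nonempty := by rwa [Set.nonempty_compl]
  have hbdd : BddAbove Sᶜ := hfin.bddAbove
  have hFS : F S ∉ S := Nat.sSup_mem hcne hbdd
  have hgt : ∀ n, F S < n → n ∈ S := by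
    intro n hn
    by_contra h
    have : n ≤ F S := le_csSup hbdd h
    omega
  have hF0 : 0 < F S := Nat.pos_of_ne_zero (fun h => hFS (h ▸ h0S))
  have hBset : ({s | s ∈ S ∧ s < F S} : Set ℕ).Nonempty := ⟨0, h0S, hF0⟩
  have hBbdd : BddAbove {s | s ∈ S ∧ s < F S} := ⟨F S, fun t ht => ht.2.le⟩
  have hBmem' : B S ∈ {s | s ∈ S ∧ s < F S} := Nat.sSup_mem hBset hBbdd
  have hBS : B S ∈ S := hBmem'.1
  have hBF : B S < F S := hBmem'.2
  have hBmax : ∀ t ∈ S, t < F S → t ≤ B S := fun t ht1 ht2 => le_csSup hBbdd ⟨ht1, ht2⟩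
  have hgap : ∀ t, B S < t → t ≤ F S → t ∉ S := by
    intro t h1 h2 ht
    rcases eq_or_lt_of_le h2 with h | h
    · exact hFS (h ▸ ht)
    · have := hBmax t ht h; omega
  -- B ≥ 1
  have hB1 : 1 ≤ B S := by
    by_contra h
    apply hnsg
    refine ⟨⟨h0S, hfin⟩, ?_⟩
    have key : ∀ x ∈ S, 0 < x → F S < x := by
      intro x hx hx0
      by_contra h2
      exact hgap x (by omega) (by omega) hx
    intro a ha b hb
    rcases Nat.eq_zero_or_pos a with rfl | ha0
    · simpa using hb
    rcases Nat.eq_zero_or_pos b with rfl | hb0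
    · simpa using ha
    exact hgt _ (by have := key a ha ha0; omega)
  -- the star property from hT
  have hmemT : ∀ x, x ∈ S → x ≤ B S → (B S - x) ∈ Stilde S :=
    fun x hx hxB => Or.inl ⟨x, hx, hxB, rfl⟩
  have star : ∀ x ∈ S, ∀ y ∈ S, x ≤ B S → y ≤ B S → B S < x + y → x + y - B S ∈ S := by
    intro x hx y hy hxB hyB hsum
    have h1 := hT.2 _ (hmemT x hx hxB) _ (hmemT y hy hyB)
    rcases h1 with ⟨t, ht, htB, heq⟩ | h
    · have : t = x + y - B S := by omega
      rwa [← this]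
    · simp only [Set.mem_setOf_eq] at h
      omega
  -- core lemma
  have core : ∀ s, s ∈ A S → 0 < s → s < B S → False := by
    intro s hsA hs0 hsB
    obtain ⟨hsS, hA⟩ := hsA
    have hFsB : F S < s + B S := by
      have h1 : s + B S ∈ S := hA _ hBS
      by_contra h
      exact hgap _ (by omega) (by omega) h1
    have forb : ∀ t ∈ S, B S < s + t → F S < s + t := by
      intro t ht h1
      by_contra h2
      exact hgap _ h1 (by omega) (hA _ ht)
    set e := Nat.gcd s (B S) with he
    have hes : e ∣ s := Nat.gcd_dvd_left _ _
    have heB : e ∣ B S := Nat.gcd_dvd_right _ _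
    have he0 : 0 < e := Nat.gcd_pos_of_pos_left _ hs0
    have hse : e ≤ s := Nat.le_of_dvd hs0 hes
    have heBs : e ≤ B S - s := Nat.le_of_dvd (by omega) (Nat.dvd_sub heB hes)
    have hstep : ∀ a, 1 ≤ a → a ≤ B S → a ∈ S →
        (if a + s ≤ B S then a + s else a + s - B S) ∈ S := by
      intro a h1 h2 ha
      by_cases hc : a + s ≤ B S
      · rw [if_pos hc, add_comm]
        exact hA _ ha
      · rw [if_neg hc]
        exact star a ha s hsS h2 (by omega) (by omega)
    have cosetS : ∀ a, a ∈ S → 1 ≤ a → a ≤ B S → ∀ x, 1 ≤ x → x ≤ B S →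
        ((e : ℤ) ∣ (x : ℤ) - (a : ℤ)) → x ∈ S := by
      intro a ha h1 h2 x hx1 hx2 hdvd
      exact coset_lemma (B S) s hs0 hsB (· ∈ S) hstep a x h1 h2 ha hx1 hx2 hdvd
    have hez : ((e:ℤ) ∣ (s:ℤ)) := Int.natCast_dvd_natCast.mpr hes
    have heBz : ((e:ℤ) ∣ (B S : ℤ)) := Int.natCast_dvd_natCast.mpr heB
    -- e > F - B
    have heG : F S < B S + e := by
      by_contra h
      push_neg at h
      have hx : (B S - s + e) ∈ S := by
        apply cosetS s hsS (by omega) (by omega) _ (by omega) (by omega)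
        have hcast : ((B S - s + e : ℕ) : ℤ) = (B S : ℤ) - s + e := by
          have : s ≤ B S := by omega
          push_cast [this]; ring
        rw [hcast]
        have heq : (B S : ℤ) - s + e - s = ((B S : ℤ) - s) + (e - s) := by ring
        rw [heq]
        exact dvd_add (dvd_sub heBz hez) (dvd_sub dvd_rfl hez)
      have h2 := forb _ hx (by omega)
      omega
    -- closure of S
    have hcl : ∀ a ∈ S, ∀ b ∈ S, a + b ∈ S := by
      intro a ha b hb
      rcases Nat.eq_zero_or_pos a with rfl | ha0
      · simpa using hb
      rcases Nat.eq_zero_or_pos b with rfl | hb0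
      · simpa using ha
      rcases lt_or_ge (B S) a with h | haB
      · have : F S < a := by
          by_contra h'
          exact hgap a h (by omega) ha
        exact hgt _ (by omega)
      rcases lt_or_ge (B S) b with h | hbB
      · have : F S < b := by
          by_contra h'
          exact hgap b h (by omega) hb
        exact hgt _ (by omega)
      -- coset representatives near B
      obtain ⟨qB, hqB⟩ := heB
      obtain ⟨qs, hqs⟩ := hes
      obtain ⟨q1, m1, hq1, hm1⟩ : ∃ q mm, e * q + mm = B S - a ∧ mm < e :=
        ⟨(B S - a) / e, (B S - a) % e, Nat.div_add_mod _ _, Nat.mod_lt _ he0⟩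
      obtain ⟨q2, m2, hq2, hm2⟩ : ∃ q mm, e * q + mm = B S - b ∧ mm < e :=
        ⟨(B S - b) / e, (B S - b) % e, Nat.div_add_mod _ _, Nat.mod_lt _ he0⟩
      set x := a + e * q1 with hxdef
      set y := b + e * q2 with hydef
      have hxB : x ≤ B S := by omega
      have hyB : y ≤ B S := by omega
      have hxint : (x:ℤ) = a + e * q1 := by rw [hxdef]; push_cast; ring
      have hyint : (y:ℤ) = b + e * q2 := by rw [hydef]; push_cast; ring
      have hqBint : (B S : ℤ) = e * qB := by rw [hqB]; push_cast; ring
      have hqsint : (s : ℤ) = e * qs := by rw [hqs]; push_cast; ring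
      have hxS : x ∈ S := cosetS a ha (by omega) haB x (by omega) hxB ⟨q1, by rw [hxint]; ring⟩
      have hyS : y ∈ S := cosetS b hb (by omega) hbB y (by omega) hyB ⟨q2, by rw [hyint]; ring⟩
      have hsum : B S < x + y := by omega
      have hzS : x + y - B S ∈ S := star x hxS y hyS hxB hyB hsum
      set z := x + y - B S with hzdef
      have hz1 : 1 ≤ z := by omega
      have hzB : z ≤ B S := by omega
      have hzint : (z:ℤ) = (x:ℤ) + y - B S := by omega
      rcases le_or_gt (a + b) (B S) with hab | hab
      · exact cosetS z hzS hz1 hzB (a + b) (by omega) hab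
          ⟨qB - q1 - q2, by push_cast; rw [hzint, hxint, hyint, hqBint]; ring⟩
      rcases le_or_gt (a + b) (F S) with hab2 | hab2
      · exfalso
        set w := B S - s + (a + b - B S) with hwdef
        have hw1 : 1 ≤ w := by omega
        have hwB : w ≤ B S := by omega
        have hwint : (w:ℤ) = (a:ℤ) + b - s := by omega
        have hwS : w ∈ S := cosetS z hzS hz1 hzB w hw1 hwB
          ⟨qB - q1 - q2 - qs, by rw [hwint, hzint, hxint, hyint, hqBint, hqsint]; ring⟩
        have h3 := forb w hwS (by omega)
        omega
      · exact hgt _ hab2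
    exact hnsg ⟨⟨h0S, hfin⟩, hcl⟩
  -- characterization of A S
  have hA_top : ∀ n, F S < n → n ∈ A S :=
    fun n hn => ⟨hgt n hn, fun t ht => hgt _ (by omega)⟩
  have hA_zero : (0:ℕ) ∈ A S := ⟨h0S, fun t ht => by simpa using ht⟩
  have hA_char : ∀ n, n ∈ A S → n = 0 ∨ n = B S ∨ F S + 1 ≤ n := by
    intro n hn
    rcases Nat.eq_zero_or_pos n with rfl | hn0
    · exact Or.inl rfl
    rcases le_or_gt n (F S) with h | h
    · rcases lt_trichotomy n (B S) with h2 | h2 | h2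
      · exact absurd (core n hn hn0 h2) (fun x => x)
      · exact Or.inr (Or.inl h2)
      · exact absurd hn.1 (hgap n h2 h)
    · exact Or.inr (Or.inr (by omega))
  constructor
  · intro h
    obtain ⟨u, huS, hu1, hu2⟩ : ∃ u, u ∈ S ∧ 1 ≤ u ∧ u ≤ F S - B S := by
      obtain ⟨u, hu⟩ := Set.nonempty_iff_ne_empty.mpr h
      exact ⟨u, hu.1, hu.2.1, hu.2.2⟩
    have hBnotA : B S ∉ A S := by
      rintro ⟨-, hBA⟩
      exact hgap (B S + u) (by omega) (by omega) (hBA u huS)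
    ext n
    simp only [Set.mem_union, Set.mem_singleton_iff, Set.mem_setOf_eq]
    constructor
    · intro hn
      rcases hA_char n hn with h1 | h1 | h1
      · exact Or.inl h1
      · exact absurd (h1 ▸ hn) hBnotA
      · exact Or.inr h1
    · rintro (rfl | h1)
      · exact hA_zero
      · exact hA_top n (by omega)
  · intro h
    have hBA : B S ∈ A S := by
      refine ⟨hBS, fun t ht => ?_⟩
      rcases Nat.eq_zero_or_pos t with rfl | ht0
      · simpa using hBS
      have hnot : t ∉ Set.Icc 1 (F S - B S) := by
        intro hc
        exact Set.eq_empty_iff_forall_notMem.mp h t ⟨ht, hc⟩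
      simp only [Set.mem_Icc, not_and, not_le] at hnot
      exact hgt _ (by have := hnot ht0; omega)
    ext n
    simp only [Set.mem_union, Set.mem_insert_iff, Set.mem_singleton_iff, Set.mem_setOf_eq]
    constructor
    · intro hn
      rcases hA_char n hn with h1 | h1 | h1
      · exact Or.inl (Or.inl h1)
      · exact Or.inl (Or.inr h1)
      · exact Or.inr h1
    · rintro ((rfl | rfl) | h1)
      · exact hA_zero
      · exact hBA
      · exact hA_top n (by omega)
end
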